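/- (Observation 1) For each n let c_n ≥ 1 divide n, let σ_n be a permutation of {1,…,n} with tour length ‖T_n‖, let SOL_n = min_{0 ≤ j ≤ c_n−1} SOL_j^{(n)} + L_n be the total cost of a feasible capacity-c_n plan consisting of the best-offset LIFO group trips together with empty connecting legs of total length L_n ≥ 0, and let OPT_n be the infimum of total costs over all capacity-c_n plans for the first n requests. If (i) c_n·L_n = o(n), (ii) c_n·‖T_n‖ = o(n), and (iii) Σ_{i=1}^n ‖s_i − t_i‖ = Ω(n) (i.e. there exist δ > 0 and N such that Σ_{i=1}^n ‖s_i − t_i‖ ≥ δ·n for all n ≥ N), then lim_{n→∞} SOL_n / OPT_n = 1. -/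

import Mathlib

open scoped BigOperators

noncomputable section

/-- `d`-dimensional Euclidean space `ℝ^d`. -/
abbrev Pt (d : ℕ) := EuclideanSpace ℝ (Fin d)

/-- The distance between the requests `r_i = (s_i, t_i)` and `r_j = (s_j, t_j)` viewed as
points of `ℝ^{2d}` with the Euclidean norm: `‖r_i − r_j‖ = √(‖s_i − s_j‖² + ‖t_i − t_j‖²)`. -/
def reqDist {d n : ℕ} (s t : ZMod n → Pt d) (i j : ZMod n) : ℝ :=
  Real.sqrt (‖s i - s j‖ ^ 2 + ‖t i - t j‖ ^ 2)

/-- The length `‖T‖` of the tour given by the permutation `σ` (indices cyclic mod `n`):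
`‖T‖ = Σ_{i} ‖r_{σ(i)} − r_{σ(i+1)}‖` in `ℝ^{2d}`. -/
def tourLength {d n : ℕ} (s t : ZMod n → Pt d) (σ : Equiv.Perm (ZMod n)) : ℝ :=
  ∑ i ∈ Finset.range n, reqDist s t (σ (i : ZMod n)) (σ ((i : ZMod n) + 1))

/-- The LIFO trip cost of the group of `c` consecutive requests starting at cyclic
position `a`: pick up `σ(a), σ(a+1), …, σ(a+c−1)` in tour order and deliver in reverse. -/
def lifoCost {d n : ℕ} (s t : ZMod n → Pt d) (σ : Equiv.Perm (ZMod n)) (c : ℕ)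
    (a : ZMod n) : ℝ :=
  (∑ i ∈ Finset.range (c - 1), ‖s (σ (a + (i : ZMod n))) - s (σ (a + (i : ZMod n) + 1))‖)
    + ‖s (σ (a + ((c - 1 : ℕ) : ZMod n))) - t (σ (a + ((c - 1 : ℕ) : ZMod n)))‖
    + ∑ i ∈ Finset.range (c - 1), ‖t (σ (a + (i : ZMod n) + 1)) - t (σ (a + (i : ZMod n)))‖

/-- For offset `j`, the `g`-th group of `c` consecutive requests starts at cyclic position
`j + 1 + g·c`. -/
def groupStart (n c j g : ℕ) : ZMod n := ((j + 1 + g * c : ℕ) : ZMod n)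

/-- The candidate cost `SOL_j`: the cyclic sequence `σ(j+1), …, σ(j+n)` is split into `m`
consecutive groups of `c` requests, and `SOL_j` is the sum of their LIFO trip costs. -/
def SOLcost {d n : ℕ} (s t : ZMod n → Pt d) (σ : Equiv.Perm (ZMod n)) (c m j : ℕ) : ℝ :=
  ∑ g ∈ Finset.range m, lifoCost s t σ c (groupStart n c j g)

/-- A (nonpreemptive) plan serving the `n` requests `(s_i, t_i)` with a single vehicle of
capacity `c`: a finite route `p_0, p_1, …, p_M` in `ℝ^d`, with pickup step `a i` and
delivery step `b i` for each request `i` (object `i` is on board during steps `k` with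
`a i ≤ k < b i`), such that the load never exceeds `c`. -/
structure Plan (d n c : ℕ) (s t : Fin n → Pt d) where
  M : ℕ
  p : ℕ → Pt d
  a : Fin n → ℕ
  b : Fin n → ℕ
  hab : ∀ i, a i < b i
  hbM : ∀ i, b i ≤ M
  hstart : ∀ i, p (a i) = s i
  hend : ∀ i, p (b i) = t i
  hcap : ∀ k : ℕ, (Finset.univ.filter fun i => a i ≤ k ∧ k < b i).card ≤ c

/-- The load (number of objects on board) of the plan at step `k`. -/
def Plan.load {d n c : ℕ} {s t : Fin n → Pt d} (P : Plan d n c s t) (k : ℕ) : ℕ :=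
  (Finset.univ.filter fun i => P.a i ≤ k ∧ k < P.b i).card

/-- The carried cost of a plan: the distance traveled while carrying at least one object. -/
def Plan.carriedCost {d n c : ℕ} {s t : Fin n → Pt d} (P : Plan d n c s t) : ℝ :=
  ∑ k ∈ Finset.range P.M, if 1 ≤ P.load k then ‖P.p (k + 1) - P.p k‖ else 0

/-- The total cost of a plan: the total distance traveled by the vehicle. -/
def Plan.totalCost {d n c : ℕ} {s t : Fin n → Pt d} (P : Plan d n c s t) : ℝ :=
  ∑ k ∈ Finset.range P.M, ‖P.p (k + 1) - P.p k‖

open Filter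


lemma path_bound {d : ℕ} (p : ℕ → Pt d) (a b : ℕ) (h : a ≤ b) :
    ‖p b - p a‖ ≤ ∑ k ∈ Finset.Ico a b, ‖p (k + 1) - p k‖ := by
  have H := dist_le_range_sum_dist (fun i => p (a + i)) (b - a)
  simp only [dist_eq_norm] at H
  rw [Finset.sum_Ico_eq_sum_range]
  calc ‖p b - p a‖ = ‖p (a + 0) - p (a + (b - a))‖ := by
        rw [Nat.add_sub_cancel' h, Nat.add_zero, norm_sub_rev]
    _ ≤ ∑ i ∈ Finset.range (b - a), ‖p (a + i) - p (a + (i + 1))‖ := H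
    _ = ∑ i ∈ Finset.range (b - a), ‖p (a + i + 1) - p (a + i)‖ := by
        refine Finset.sum_congr rfl fun i _ => ?_
        rw [norm_sub_rev, ← add_assoc]

lemma plan_lb {d n c : ℕ} {s t : Fin n → Pt d} (P : Plan d n c s t) :
    ∑ i : Fin n, ‖s i - t i‖ ≤ (c : ℝ) * P.totalCost := by
  classical
  have h1 : ∀ i : Fin n, ‖s i - t i‖
      ≤ ∑ k ∈ Finset.Ico (P.a i) (P.b i), ‖P.p (k+1) - P.p k‖ := by
    intro i
    have := path_bound P.p (P.a i) (P.b i) (P.hab i).le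
    rw [P.hstart i, P.hend i, norm_sub_rev] at this
    exact this
  calc ∑ i : Fin n, ‖s i - t i‖
      ≤ ∑ i : Fin n, ∑ k ∈ Finset.Ico (P.a i) (P.b i), ‖P.p (k+1) - P.p k‖ :=
        Finset.sum_le_sum fun i _ => h1 i
    _ = ∑ i : Fin n, ∑ k ∈ Finset.range P.M,
          if P.a i ≤ k ∧ k < P.b i then ‖P.p (k+1) - P.p k‖ else 0 := by
        refine Finset.sum_congr rfl fun i _ => ?_
        rw [← Finset.sum_filter]
        refine (Finset.sum_congr ?_ fun _ _ => rfl)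
        ext k
        simp only [Finset.mem_Ico, Finset.mem_filter, Finset.mem_range]
        constructor
        · intro hk; exact ⟨lt_of_lt_of_le hk.2 (P.hbM i), hk⟩
        · intro hk; exact hk.2
    _ = ∑ k ∈ Finset.range P.M, ∑ i : Fin n,
          if P.a i ≤ k ∧ k < P.b i then ‖P.p (k+1) - P.p k‖ else 0 := Finset.sum_comm
    _ = ∑ k ∈ Finset.range P.M,
          ((Finset.univ.filter fun i : Fin n => P.a i ≤ k ∧ k < P.b i).card : ℝ)
            * ‖P.p (k+1) - P.p k‖ := by
        refine Finset.sum_congr rfl fun k _ => ?_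
        rw [Finset.sum_ite, Finset.sum_const, Finset.sum_const_zero, add_zero,
          nsmul_eq_mul]
    _ ≤ ∑ k ∈ Finset.range P.M, (c : ℝ) * ‖P.p (k+1) - P.p k‖ := by
        refine Finset.sum_le_sum fun k _ => ?_
        exact mul_le_mul_of_nonneg_right (by exact_mod_cast P.hcap k) (norm_nonneg _)
    _ = (c : ℝ) * P.totalCost := by rw [Plan.totalCost, Finset.mul_sum]

lemma sum_range_zmod {n : ℕ} [NeZero n] (F : ZMod n → ℝ) :
    ∑ i ∈ Finset.range n, F ((i : ℕ) : ZMod n) = ∑ y : ZMod n, F y := by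
  refine Finset.sum_nbij' (fun i => ((i : ℕ) : ZMod n)) (fun y => y.val)
    (fun a _ => Finset.mem_univ _) (fun y _ => Finset.mem_range.mpr (ZMod.val_lt y))
    (fun a ha => ZMod.val_cast_of_lt (Finset.mem_range.mp ha))
    (fun y _ => ZMod.natCast_rightInverse y) (fun a _ => rfl)

lemma sum_zmod_val {n : ℕ} [NeZero n] (G : ℕ → ℝ) :
    ∑ y : ZMod n, G y.val = ∑ i ∈ Finset.range n, G i := by
  rw [← sum_range_zmod (fun y => G y.val)]
  exact Finset.sum_congr rfl fun i hi => by
    rw [ZMod.val_cast_of_lt (Finset.mem_range.mp hi)]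

lemma add_le_sqrt2 (a b : ℝ) (ha : 0 ≤ a) (hb : 0 ≤ b) :
    a + b ≤ Real.sqrt 2 * Real.sqrt (a^2 + b^2) := by
  rw [← Real.sqrt_mul (by norm_num : (0:ℝ) ≤ 2)]
  calc a + b = Real.sqrt ((a+b)^2) := (Real.sqrt_sq (by positivity)).symm
    _ ≤ Real.sqrt (2 * (a^2+b^2)) := Real.sqrt_le_sqrt (by nlinarith [sq_nonneg (a-b)])

lemma code_div {g c i : ℕ} (hc : 0 < c) (hi : i < c) : (g*c+i)/c = g := by
  rw [mul_comm, Nat.mul_add_div hc, Nat.div_eq_of_lt hi, add_zero]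

lemma tourLength_nonneg {d n : ℕ} (s t : ZMod n → Pt d) (σ : Equiv.Perm (ZMod n)) :
    0 ≤ tourLength s t σ :=
  Finset.sum_nonneg fun _ _ => Real.sqrt_nonneg _

lemma avg_bound {d n : ℕ} [NeZero n] (s t : ZMod n → Pt d) (σ : Equiv.Perm (ZMod n))
    {c : ℕ} (hc : 0 < c) (hdvd : c ∣ n) :
    (Finset.range c).inf' (Finset.nonempty_range_iff.mpr hc.ne')
        (fun j => SOLcost s t σ c (n / c) j)
      ≤ Real.sqrt 2 * tourLength s t σ + (∑ y : ZMod n, ‖s y - t y‖) / c := by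
  have hn : 0 < n := Nat.pos_of_ne_zero (NeZero.ne n)
  set m := n / c with hm
  have hmc : m * c = n := Nat.div_mul_cancel hdvd
  set f : ZMod n → ℝ := fun y => ‖s (σ y) - s (σ (y+1))‖ + ‖t (σ y) - t (σ (y+1))‖
    with hf
  -- tour bound on sum of f
  have hfT : ∑ y : ZMod n, f y ≤ Real.sqrt 2 * tourLength s t σ := by
    rw [tourLength, sum_range_zmod
      (fun y => reqDist s t (σ y) (σ (y+1))), Finset.mul_sum]
    refine Finset.sum_le_sum fun y _ => ?_
    exact add_le_sqrt2 _ _ (norm_nonneg _) (norm_nonneg _)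
  have hf0 : ∀ y, 0 ≤ f y := fun y => add_nonneg (norm_nonneg _) (norm_nonneg _)
  -- rewrite lifoCost
  have hlifo : ∀ a : ZMod n, lifoCost s t σ c a
      = (∑ i ∈ Finset.range (c-1), f (a + (i : ZMod n)))
        + ‖s (σ (a + ((c-1:ℕ) : ZMod n))) - t (σ (a + ((c-1:ℕ) : ZMod n)))‖ := by
    intro a
    have h2 : ∑ i ∈ Finset.range (c-1), ‖t (σ (a + (i:ZMod n) + 1)) - t (σ (a + (i:ZMod n)))‖
        = ∑ i ∈ Finset.range (c-1), ‖t (σ (a + (i:ZMod n))) - t (σ (a + (i:ZMod n) + 1))‖ :=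
      Finset.sum_congr rfl fun i _ => norm_sub_rev _ _
    rw [lifoCost, h2, hf]
    rw [Finset.sum_add_distrib]
    ring
  -- the sum over offsets
  have hsum : ∑ j ∈ Finset.range c, SOLcost s t σ c m j
      ≤ c * (Real.sqrt 2 * tourLength s t σ) + ∑ y : ZMod n, ‖s y - t y‖ := by
    have expand : ∀ j, SOLcost s t σ c m j
        = (∑ g ∈ Finset.range m, ∑ i ∈ Finset.range (c-1), f (groupStart n c j g + (i:ZMod n)))
          + ∑ g ∈ Finset.range m,
              ‖s (σ (groupStart n c j g + ((c-1:ℕ):ZMod n)))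
                - t (σ (groupStart n c j g + ((c-1:ℕ):ZMod n)))‖ := by
      intro j
      rw [SOLcost]
      simp_rw [hlifo]
      rw [Finset.sum_add_distrib]
    -- Edge part: for each j, bounded by sum over all of ZMod n
    have hedge : ∀ j ∈ Finset.range c,
        ∑ g ∈ Finset.range m, ∑ i ∈ Finset.range (c-1), f (groupStart n c j g + (i:ZMod n))
          ≤ Real.sqrt 2 * tourLength s t σ := by
      intro j _
      have hrw : ∀ g i : ℕ, groupStart n c j g + (i:ZMod n)
          = ((j + 1 + (g * c + i) : ℕ) : ZMod n) := by
        intro g i; rw [groupStart]; push_cast; ring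
      calc ∑ g ∈ Finset.range m, ∑ i ∈ Finset.range (c-1), f (groupStart n c j g + (i:ZMod n))
          = ∑ p ∈ Finset.range m ×ˢ Finset.range (c-1),
              f (((j + 1 + (p.1 * c + p.2) : ℕ) : ZMod n)) := by
            rw [Finset.sum_product]
            exact Finset.sum_congr rfl fun g _ => Finset.sum_congr rfl fun i _ => by
              rw [hrw]
        _ = ∑ y ∈ (Finset.range m ×ˢ Finset.range (c-1)).image
              (fun p : ℕ × ℕ => ((j + 1 + (p.1 * c + p.2) : ℕ) : ZMod n)), f y := by
            rw [Finset.sum_image]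
            intro p hp q hq hpq
            simp only [Finset.mem_coe, Finset.mem_product, Finset.mem_range] at hp hq
            have hlt : p.1 * c + p.2 < n := by
              calc p.1 * c + p.2 < p.1 * c + c := by omega
                _ = (p.1 + 1) * c := by ring
                _ ≤ m * c := Nat.mul_le_mul_right c (by omega)
                _ = n := hmc
            have hlt' : q.1 * c + q.2 < n := by
              calc q.1 * c + q.2 < q.1 * c + c := by omega
                _ = (q.1 + 1) * c := by ring
                _ ≤ m * c := Nat.mul_le_mul_right c (by omega)
                _ = n := hmc
            have : ((p.1 * c + p.2 : ℕ) : ZMod n) = ((q.1 * c + q.2 : ℕ) : ZMod n) := by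
              have := hpq
              push_cast at this ⊢
              exact add_left_cancel this
            have heq : p.1 * c + p.2 = q.1 * c + q.2 := by
              have hv := congrArg ZMod.val this
              rwa [ZMod.val_cast_of_lt hlt, ZMod.val_cast_of_lt hlt'] at hv
            have hd1 : (p.1 * c + p.2)/c = p.1 := code_div hc (by omega)
            have hd2 : (q.1 * c + q.2)/c = q.1 := code_div hc (by omega)
            have e1 : p.1 = q.1 := by rw [← hd1, ← hd2, heq]
            rw [e1] at heq
            exact Prod.ext e1 (Nat.add_left_cancel heq)
        _ ≤ ∑ y : ZMod n, f y :=
            Finset.sum_le_sum_of_subset_of_nonneg (Finset.subset_univ _)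
              (fun y _ _ => hf0 y)
        _ ≤ Real.sqrt 2 * tourLength s t σ := hfT
    -- Delivery part: sums to exactly the total over ZMod n
    have hdel : ∑ j ∈ Finset.range c, ∑ g ∈ Finset.range m,
        ‖s (σ (groupStart n c j g + ((c-1:ℕ):ZMod n)))
          - t (σ (groupStart n c j g + ((c-1:ℕ):ZMod n)))‖
        = ∑ y : ZMod n, ‖s y - t y‖ := by
      set G : ZMod n → ℝ := fun y => ‖s (σ y) - t (σ y)‖ with hG
      have hrw : ∀ j g : ℕ, groupStart n c j g + ((c-1:ℕ):ZMod n)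
          = (((j + g * c) + c : ℕ) : ZMod n) := by
        intro j g
        rw [groupStart]
        have : j + 1 + g * c + (c - 1) = j + g * c + c := by omega
        push_cast [← this]
        ring
      calc ∑ j ∈ Finset.range c, ∑ g ∈ Finset.range m,
            ‖s (σ (groupStart n c j g + ((c-1:ℕ):ZMod n)))
              - t (σ (groupStart n c j g + ((c-1:ℕ):ZMod n)))‖
          = ∑ p ∈ Finset.range c ×ˢ Finset.range m, G (((p.1 + p.2 * c) + c : ℕ)) := by
            rw [Finset.sum_product]
            exact Finset.sum_congr rfl fun j _ => Finset.sum_congr rfl fun g _ => by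
              rw [hrw]
        _ = ∑ x ∈ Finset.range n, G ((x + c : ℕ)) := by
            refine Finset.sum_nbij' (fun p => p.1 + p.2 * c) (fun x => (x % c, x / c))
              ?_ ?_ ?_ ?_ ?_
            · rintro ⟨j, g⟩ hp
              simp only [Finset.mem_product, Finset.mem_range] at hp
              refine Finset.mem_range.mpr ?_
              calc j + g * c < c + g * c := by omega
                _ = (g + 1) * c := by ring
                _ ≤ m * c := Nat.mul_le_mul_right c (by omega)
                _ = n := hmc
            · intro x hx
              simp only [Finset.mem_range] at hx
              simp only [Finset.mem_product, Finset.mem_range]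
              exact ⟨Nat.mod_lt _ hc, (Nat.div_lt_iff_lt_mul hc).mpr (by omega)⟩
            · rintro ⟨j, g⟩ hp
              simp only [Finset.mem_product, Finset.mem_range] at hp
              have h1 : (j + g * c) % c = j := by
                rw [Nat.add_mul_mod_self_right, Nat.mod_eq_of_lt hp.1]
              have h2 : (j + g * c) / c = g := by
                rw [Nat.add_mul_div_right _ _ hc, Nat.div_eq_of_lt hp.1, zero_add]
              simp [h1, h2]
            · intro x _
              exact Nat.mod_add_div' x c
            · rintro ⟨j, g⟩ _; rfl
        _ = ∑ y : ZMod n, G (y + (c : ZMod n)) := by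
            rw [← sum_range_zmod (fun y => G (y + (c : ZMod n)))]
            refine Finset.sum_congr rfl fun x _ => ?_
            push_cast
            ring_nf
        _ = ∑ y : ZMod n, G y := Equiv.sum_comp (Equiv.addRight (c : ZMod n)) G
        _ = ∑ y : ZMod n, ‖s y - t y‖ := Equiv.sum_comp σ (fun y => ‖s y - t y‖)
    calc ∑ j ∈ Finset.range c, SOLcost s t σ c m j
        = (∑ j ∈ Finset.range c, ∑ g ∈ Finset.range m, ∑ i ∈ Finset.range (c-1),
            f (groupStart n c j g + (i:ZMod n)))
          + ∑ j ∈ Finset.range c, ∑ g ∈ Finset.range m,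
              ‖s (σ (groupStart n c j g + ((c-1:ℕ):ZMod n)))
                - t (σ (groupStart n c j g + ((c-1:ℕ):ZMod n)))‖ := by
          simp_rw [expand]; rw [Finset.sum_add_distrib]
      _ ≤ (∑ j ∈ Finset.range c, Real.sqrt 2 * tourLength s t σ)
          + ∑ y : ZMod n, ‖s y - t y‖ := by
          rw [hdel]
          exact add_le_add_left (Finset.sum_le_sum hedge) _
      _ = c * (Real.sqrt 2 * tourLength s t σ) + ∑ y : ZMod n, ‖s y - t y‖ := by
          rw [Finset.sum_const, Finset.card_range, nsmul_eq_mul]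
  -- conclude by averaging
  have hcard : ((Finset.range c).card : ℝ) = c := by rw [Finset.card_range]
  have hinf : (c : ℝ) * ((Finset.range c).inf' (Finset.nonempty_range_iff.mpr hc.ne')
        (fun j => SOLcost s t σ c m j))
      ≤ ∑ j ∈ Finset.range c, SOLcost s t σ c m j := by
    have := Finset.card_nsmul_le_sum (Finset.range c)
      (fun j => SOLcost s t σ c m j)
      ((Finset.range c).inf' (Finset.nonempty_range_iff.mpr hc.ne')
        (fun j => SOLcost s t σ c m j))
      (fun j hj => Finset.inf'_le _ hj)
    rw [Finset.card_range, nsmul_eq_mul] at this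
    exact this
  have hcpos : (0:ℝ) < c := by exact_mod_cast hc
  rw [← mul_le_mul_iff_right₀ hcpos]
  calc (c:ℝ) * _ ≤ ∑ j ∈ Finset.range c, SOLcost s t σ c m j := hinf
    _ ≤ c * (Real.sqrt 2 * tourLength s t σ) + ∑ y : ZMod n, ‖s y - t y‖ := hsum
    _ = c * (Real.sqrt 2 * tourLength s t σ + (∑ y : ZMod n, ‖s y - t y‖) / c) := by
      rw [mul_add]
      congr 1
      field_simp

/-- Observation 1: for each `n`, `c_n ∣ n`, `σ_n` is a permutation with
tour length `‖T_n‖`, and `SOL_n = min_{0 ≤ j < c_n} SOL_j^{(n)} + L_n` is the total cost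
of a feasible capacity-`c_n` plan (the best-offset LIFO group trips together with empty
connecting legs of total length `L_n ≥ 0`); `OPT_n` is the infimum of total costs over
all capacity-`c_n` plans for the first `n` requests. If (i) `c_n·L_n = o(n)`,
(ii) `c_n·‖T_n‖ = o(n)`, and (iii) `Σ_{i<n} ‖s_i − t_i‖ = Ω(n)`, then
`SOL_n / OPT_n → 1`. -/
theorem stmt_11 (d : ℕ) (hd : 1 ≤ d) (s t : ℕ → Pt d)
    (c : ℕ → ℕ) (hc : ∀ n, 0 < c n) (hdvd : ∀ n, c n ∣ n)
    (σ : (n : ℕ) → Equiv.Perm (ZMod n))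
    (L : ℕ → ℝ) (hL : ∀ n, 0 ≤ L n)
    (hplan : ∀ n : ℕ, ∃ P : Plan d n (c n)
        (fun i : Fin n => s i.val) (fun i : Fin n => t i.val),
      P.totalCost
        = ((Finset.range (c n)).inf' (Finset.nonempty_range_iff.mpr (hc n).ne')
            (fun j => SOLcost (fun i : ZMod n => s i.val) (fun i : ZMod n => t i.val)
              (σ n) (c n) (n / c n) j)) + L n)
    (hi : Tendsto (fun n : ℕ => (c n : ℝ) * L n / n) atTop (nhds 0))
    (hii : Tendsto (fun n : ℕ => (c n : ℝ)
        * tourLength (fun i : ZMod n => s i.val) (fun i : ZMod n => t i.val) (σ n) / n)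
      atTop (nhds 0))
    (hiii : ∃ δ : ℝ, 0 < δ ∧ ∃ N : ℕ, ∀ n ≥ N,
      δ * n ≤ ∑ i ∈ Finset.range n, ‖s i - t i‖) :
    Tendsto (fun n : ℕ =>
        (((Finset.range (c n)).inf' (Finset.nonempty_range_iff.mpr (hc n).ne')
            (fun j => SOLcost (fun i : ZMod n => s i.val) (fun i : ZMod n => t i.val)
              (σ n) (c n) (n / c n) j)) + L n)
          / sInf {x : ℝ | ∃ P : Plan d n (c n)
              (fun i : Fin n => s i.val) (fun i : Fin n => t i.val), P.totalCost = x})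
      atTop (nhds 1) := by
  obtain ⟨δ, hδ, N, hN⟩ := hiii
  set T : ℕ → ℝ := fun n =>
    tourLength (fun i : ZMod n => s i.val) (fun i : ZMod n => t i.val) (σ n) with hT
  set g : ℕ → ℝ := fun n =>
    1 + (Real.sqrt 2 * ((c n : ℝ) * T n / n) + ((c n : ℝ) * L n / n)) / δ with hg
  have hgt : Tendsto g atTop (nhds 1) := by
    have h0 := ((hii.const_mul (Real.sqrt 2)).add hi).div_const δ
    have h1 := h0.const_add (1 : ℝ)
    simpa using h1
  refine tendsto_of_tendsto_of_tendsto_of_le_of_le' tendsto_const_nhds hgt ?_ ?_ <;>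
    · filter_upwards [eventually_ge_atTop (max N 1)] with n hn
      have hn1 : 0 < n := le_trans (le_max_right N 1) hn
      have hnN : N ≤ n := le_trans (le_max_left N 1) hn
      haveI : NeZero n := ⟨hn1.ne'⟩
      have hcpos : (0 : ℝ) < c n := by exact_mod_cast hc n
      set I : ℝ := (Finset.range (c n)).inf' (Finset.nonempty_range_iff.mpr (hc n).ne')
        (fun j => SOLcost (fun i : ZMod n => s i.val) (fun i : ZMod n => t i.val)
          (σ n) (c n) (n / c n) j) with hI
      set Dn : ℝ := ∑ i ∈ Finset.range n, ‖s i - t i‖ with hDn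
      have hDlb : δ * n ≤ Dn := hN n hnN
      have hDpos : (0 : ℝ) < Dn :=
        lt_of_lt_of_le (by positivity) hDlb
      have hlb : ∀ x ∈ {x : ℝ | ∃ P : Plan d n (c n)
          (fun i : Fin n => s i.val) (fun i : Fin n => t i.val), P.totalCost = x},
          Dn / c n ≤ x := by
        rintro x ⟨P, rfl⟩
        have hplb := plan_lb P
        have hfin : ∑ i : Fin n, ‖s i.val - t i.val‖ = Dn :=
          Fin.sum_univ_eq_sum_range (fun i => ‖s i - t i‖) n
        rw [div_le_iff₀ hcpos, mul_comm]
        rw [hfin] at hplb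
        exact hplb
      obtain ⟨P0, hP0⟩ := hplan n
      have hSne : {x : ℝ | ∃ P : Plan d n (c n)
          (fun i : Fin n => s i.val) (fun i : Fin n => t i.val), P.totalCost = x}.Nonempty :=
        ⟨P0.totalCost, P0, rfl⟩
      have hbdd : BddBelow {x : ℝ | ∃ P : Plan d n (c n)
          (fun i : Fin n => s i.val) (fun i : Fin n => t i.val), P.totalCost = x} :=
        ⟨Dn / c n, hlb⟩
      set OPT : ℝ := sInf {x : ℝ | ∃ P : Plan d n (c n)
          (fun i : Fin n => s i.val) (fun i : Fin n => t i.val), P.totalCost = x} with hOPT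
      have hOPTlb : Dn / c n ≤ OPT := le_csInf hSne hlb
      have hOPTpos : (0 : ℝ) < OPT := lt_of_lt_of_le (div_pos hDpos hcpos) hOPTlb
      have hOPTle : OPT ≤ I + L n := by
        rw [hOPT, ← hP0]
        exact csInf_le hbdd ⟨P0, rfl⟩
      have hTnn : 0 ≤ T n := tourLength_nonneg _ _ _
      have hSOLub : I ≤ Real.sqrt 2 * T n + Dn / c n := by
        have := avg_bound (fun i : ZMod n => s i.val) (fun i : ZMod n => t i.val)
          (σ n) (hc n) (hdvd n)
        rw [sum_zmod_val (fun i => ‖s i - t i‖)] at this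
        exact this
      first
      | exact (one_le_div hOPTpos).mpr hOPTle
      | (show (I + L n) / OPT ≤ g n
         have hILnn : 0 ≤ I + L n := le_trans hOPTpos.le hOPTle
         have hDc : (0:ℝ) < Dn / c n := div_pos hDpos hcpos
         have hnpos : (0:ℝ) < n := by exact_mod_cast hn1
         calc (I + L n) / OPT ≤ (I + L n) / (Dn / c n) := by
                gcongr
              _ ≤ (Real.sqrt 2 * T n + Dn / c n + L n) / (Dn / c n) := by
                gcongr
              _ = 1 + (Real.sqrt 2 * T n + L n) * c n / Dn := by
                field_simp
                ring
              _ ≤ 1 + (Real.sqrt 2 * ((c n : ℝ) * T n / n) + ((c n : ℝ) * L n / n)) / δ := by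
                have h1 : (Real.sqrt 2 * T n + L n) * c n / Dn
                    ≤ (Real.sqrt 2 * T n + L n) * c n / (δ * n) := by
                  gcongr
                  have := hL n
                  positivity
                have h2 : (Real.sqrt 2 * T n + L n) * c n / (δ * n)
                    = (Real.sqrt 2 * ((c n : ℝ) * T n / n) + ((c n : ℝ) * L n / n)) / δ := by
                  field_simp
                linarith
              _ = g n := rfl)
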